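/- arXiv:math/0507208 — 4 statements merged into one kernel-verified Lean document; each statement's English description precedes it below -/
import Mathlib

section
/- Let C = ⟨a⟩ be cyclic of order 2^n, n ≥ 2, x = Σ α_i a^i ∈ F_2 C, and x* the image of x under the involution induced by a ↦ a^{-1}. Then xx* = χ(x) + Σ_{j=1}^{2^{n-1}-1} γ_j (a^j + a^{-j}), where γ_j = Σ_{i=0}^{2^n-1} α_i α_{i-j mod 2^n}; in particular the coefficient of a^{2^{n-1}} in xx* is 0 and the coefficient of 1 is χ(x). -/
open MonoidAlgebra Finset

noncomputable section

/-- The cyclic group of order `2^n`, written multiplicatively. -/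
abbrev Cgrp (n : ℕ) : Type := Multiplicative (ZMod (2 ^ n))

/-- The group algebra `F₂C` of the cyclic group of order `2^n` over the field of two elements. -/
abbrev FC (n : ℕ) : Type := MonoidAlgebra (ZMod 2) (Cgrp n)

/-- The augmentation map `χ : F₂C → F₂`. -/
def aug (n : ℕ) : FC n →ₐ[ZMod 2] ZMod 2 :=
  MonoidAlgebra.lift (ZMod 2) (ZMod 2) (Cgrp n) 1

/-- The generator `a` of the cyclic group `C`. -/
def agen (n : ℕ) : Cgrp n := Multiplicative.ofAdd (1 : ZMod (2 ^ n))

/-- The generator `a` viewed inside the group algebra `F₂C`. -/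
def A (n : ℕ) : FC n := MonoidAlgebra.of (ZMod 2) (Cgrp n) (agen n)

/-- Group elements of `C` as elements of the group algebra. -/
def Gel (n : ℕ) (i : ZMod (2 ^ n)) : FC n :=
  MonoidAlgebra.of (ZMod 2) (Cgrp n) (Multiplicative.ofAdd i)

/-- The involution `*` of `F₂C` induced by `a ↦ a⁻¹`. -/
def starOne (n : ℕ) : FC n ≃ₐ[ZMod 2] FC n :=
  MonoidAlgebra.domCongr (ZMod 2) (ZMod 2) (MulEquiv.inv (Cgrp n))

/-- The scalar `2^(n-1) - 1` in `ZMod (2^n)`. -/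
def cf (n : ℕ) : ZMod (2 ^ n) := 2 ^ (n - 1) - 1

lemma two_pow_zmod (n : ℕ) : ((2 : ZMod (2 ^ n))) ^ n = 0 := by
  have h : ((2 ^ n : ℕ) : ZMod (2 ^ n)) = 0 := ZMod.natCast_self _
  push_cast at h
  exact h

lemma cf_sq (n : ℕ) (hn : 2 ≤ n) : cf n * cf n = 1 := by
  have h0 := two_pow_zmod n
  have e1 : (2 : ZMod (2 ^ n)) ^ (n - 1) * 2 ^ (n - 1) = 0 := by
    rw [← pow_add]
    have h : n - 1 + (n - 1) = n + (n - 2) := by omega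
    rw [h, pow_add, h0, zero_mul]
  have e2 : (2 : ZMod (2 ^ n)) * 2 ^ (n - 1) = 0 := by
    have h : (2 : ZMod (2 ^ n)) * 2 ^ (n - 1) = 2 ^ (n - 1 + 1) := (pow_succ' 2 (n-1)).symm
    rw [h]
    have h' : n - 1 + 1 = n := by omega
    rw [h', h0]
  have key : cf n * cf n = 2 ^ (n - 1) * 2 ^ (n - 1) - 2 * 2 ^ (n - 1) + 1 := by
    unfold cf; ring
  rw [key, e1, e2]; ring

/-- The automorphism `z ↦ (2^(n-1)-1)·z` of `ZMod (2^n)`. -/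
def thetaAdd (n : ℕ) (hn : 2 ≤ n) : ZMod (2 ^ n) ≃+ ZMod (2 ^ n) where
  toFun z := cf n * z
  invFun z := cf n * z
  left_inv z := by show cf n * (cf n * z) = z; rw [← mul_assoc, cf_sq n hn, one_mul]
  right_inv z := by show cf n * (cf n * z) = z; rw [← mul_assoc, cf_sq n hn, one_mul]
  map_add' x y := mul_add _ _ _

/-- The automorphism `a ↦ a^(2^(n-1)-1)` of `C`. -/
def theta (n : ℕ) (hn : 2 ≤ n) : Cgrp n ≃* Cgrp n :=
  AddEquiv.toMultiplicative (thetaAdd n hn)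

/-- The involution `⊛` of `F₂C` induced by `a ↦ a^(2^(n-1)-1)`. -/
def starTwo (n : ℕ) (hn : 2 ≤ n) : FC n ≃ₐ[ZMod 2] FC n :=
  MonoidAlgebra.domCongr (ZMod 2) (ZMod 2) (theta n hn)

/-- The group `V(F₂C)` of normalized units, as a subgroup of the unit group of `F₂C`. -/
def Vgrp (n : ℕ) : Subgroup (FC n)ˣ where
  carrier := {u | aug n (↑u : FC n) = 1}
  one_mem' := by simp [Set.mem_setOf_eq]
  mul_mem' := by
    intro u v hu hv
    simp only [Set.mem_setOf_eq, Units.val_mul, map_mul] at *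
    rw [hu, hv, one_mul]
  inv_mem' := by
    intro u hu
    simp only [Set.mem_setOf_eq] at *
    have h : aug n ((↑u : FC n) * (↑u⁻¹ : FC n)) = 1 := by
      rw [Units.mul_inv, map_one]
    rw [map_mul, hu, one_mul] at h
    exact h

/-- The sum `Ĉ` of all elements of `C` inside the group algebra. -/
def hatC (n : ℕ) : FC n := ∑ g : Cgrp n, MonoidAlgebra.of (ZMod 2) (Cgrp n) g

/-- The sum `Ĉ²` of all elements of the subgroup `C²` of squares. -/
def hatCsq (n : ℕ) : FC n :=
  ∑ g ∈ Finset.image (fun h : Cgrp n => h * h) Finset.univ,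
    MonoidAlgebra.of (ZMod 2) (Cgrp n) g

/-- The subspace `F₂C²` of `F₂C` spanned by the subgroup of squares. -/
def sqSpan (n : ℕ) : Submodule (ZMod 2) (FC n) :=
  Submodule.span (ZMod 2) (Set.range fun g : Cgrp n => MonoidAlgebra.of (ZMod 2) (Cgrp n) (g * g))

lemma hatC_mul_hatC (n : ℕ) (hn : 1 ≤ n) : hatC n * hatC n = 0 := by
  classical
  unfold hatC
  rw [Finset.sum_mul_sum]
  have h1 : ∀ g : Cgrp n,
      ∑ h : Cgrp n, MonoidAlgebra.of (ZMod 2) (Cgrp n) g * MonoidAlgebra.of (ZMod 2) (Cgrp n) h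
        = hatC n := by
    intro g
    have h2 : ∀ h : Cgrp n,
        MonoidAlgebra.of (ZMod 2) (Cgrp n) g * MonoidAlgebra.of (ZMod 2) (Cgrp n) h
          = MonoidAlgebra.of (ZMod 2) (Cgrp n) (g * h) := by
      intro h; rw [map_mul]
    unfold hatC
    calc ∑ h : Cgrp n, MonoidAlgebra.of (ZMod 2) (Cgrp n) g * MonoidAlgebra.of (ZMod 2) (Cgrp n) h
        = ∑ h : Cgrp n, MonoidAlgebra.of (ZMod 2) (Cgrp n) (g * h) := by
          exact Finset.sum_congr rfl fun h _ => h2 h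
      _ = ∑ h : Cgrp n, MonoidAlgebra.of (ZMod 2) (Cgrp n) h :=
          Fintype.sum_equiv (Equiv.mulLeft g) _ _ (fun h => rfl)
  calc (∑ g : Cgrp n, ∑ h : Cgrp n,
        MonoidAlgebra.of (ZMod 2) (Cgrp n) g * MonoidAlgebra.of (ZMod 2) (Cgrp n) h)
      = ∑ _g : Cgrp n, hatC n := Finset.sum_congr rfl fun g _ => h1 g
    _ = (Fintype.card (Cgrp n)) • hatC n := by rw [Finset.sum_const, Finset.card_univ]
    _ = 0 := by
        rw [← Nat.cast_smul_eq_nsmul (ZMod 2)]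
        have hc : ((Fintype.card (Cgrp n) : ℕ) : ZMod 2) = 0 := by
          have : Fintype.card (Cgrp n) = 2 ^ n := by simp [Cgrp, ZMod.card]
          rw [this]
          push_cast
          rw [show ((2:ZMod 2) = 0) from rfl, zero_pow (by omega)]
        rw [hc, zero_smul]

lemma add_self_FC (n : ℕ) (x : FC n) : x + x = 0 := by
  rw [← two_smul (ZMod 2) x, show ((2:ZMod 2) = 0) from rfl, zero_smul]

/-- `1 + Ĉ` as a unit of `F₂C` (it is its own inverse). -/
def uC (n : ℕ) (hn : 1 ≤ n) : (FC n)ˣ :=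
  ⟨1 + hatC n, 1 + hatC n, by
    have h : (1 + hatC n) * (1 + hatC n) = 1 + (hatC n + hatC n) + hatC n * hatC n := by ring
    rw [h, add_self_FC, hatC_mul_hatC n hn, add_zero, add_zero], by
    have h : (1 + hatC n) * (1 + hatC n) = 1 + (hatC n + hatC n) + hatC n * hatC n := by ring
    rw [h, add_self_FC, hatC_mul_hatC n hn, add_zero, add_zero]⟩

/-! The coefficient of `a^z` in `x x*` is the autocorrelation `γ_z = Σ_i α_i α_{i-z}`, which is
symmetric under `z ↦ -z`. Over `F₂` we have `α_i² = α_i`, so `γ_0 = χ(x)`; and for the element `m`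
of order two the shift `i ↦ i - m` pairs the summands of `γ_m` into equal terms, so `γ_m = 0`.
Grouping the remaining elements `z` of `ℤ/2^n` into pairs `{j, -j}` with `1 ≤ j < 2^(n-1)` gives
the formula. -/

section Autocorrelation

variable {R G : Type*} [AddCommGroup G] [Fintype G]

def autocorr [CommSemiring R] (α : G → R) (z : G) : R := ∑ i, α i * α (i - z)

theorem autocorr_neg [CommSemiring R] (α : G → R) (z : G) : autocorr α (-z) = autocorr α z :=
  Fintype.sum_equiv (Equiv.addRight z) _ _ fun i => by simp [mul_comm]

theorem autocorr_zero (α : G → ZMod 2) : autocorr α 0 = ∑ i, α i :=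
  Finset.sum_congr rfl fun i _ => by rw [sub_zero, ← sq, ZMod.pow_card]

theorem autocorr_eq_zero_of_add_self_eq_zero [CommRing R] [CharP R 2] (α : G → R) {m : G}
    (hm : m + m = 0) (hm0 : m ≠ 0) : autocorr α m = 0 := by
  have hsub : ∀ i : G, i - m - m = i := fun i => by rw [sub_sub, hm, sub_zero]
  refine Finset.sum_ninvolution (· - m) (fun i => ?_) (fun i _ => by simpa using hm0)
    (fun i => mem_univ _) hsub
  rw [hsub, mul_comm, CharTwo.add_self_eq_zero]

theorem MonoidAlgebra.sum_smul_of_mul_domCongr_inv [CommSemiring R] (α : G → R) :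
    (∑ i, α i • of R (Multiplicative G) (.ofAdd i)) *
        domCongr R R (MulEquiv.inv (Multiplicative G)) (∑ i, α i • of R _ (.ofAdd i))
      = ∑ z, autocorr α z • of R (Multiplicative G) (.ofAdd z) := by
  have hinv : ∀ i : G, domCongr R R (MulEquiv.inv (Multiplicative G)) (of R _ (.ofAdd i))
      = of R _ (.ofAdd (-i)) := fun i => by simp [of_apply, domCongr_single]
  simp only [map_sum, map_smul, hinv, sum_mul_sum, smul_mul_smul, ← map_mul, ← ofAdd_add]
  calc ∑ i, ∑ k, (α i * α k) • of R _ (.ofAdd (i + -k))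
      = ∑ i, ∑ z, (α i * α (i - z)) • of R (Multiplicative G) (.ofAdd z) :=
        sum_congr rfl fun i _ => Fintype.sum_equiv (Equiv.subLeft i) _ _ fun k => by
          rw [Equiv.subLeft_apply, sub_sub_cancel, sub_eq_add_neg]
    _ = _ := by rw [sum_comm]; simp only [autocorr, sum_smul]

end Autocorrelation

theorem MonoidAlgebra.coeff_sum_smul_of {R G : Type*} [CommSemiring R] [AddMonoid G] [Fintype G]
    (c : G → R) (w : G) : (∑ z, c z • of R (Multiplicative G) (.ofAdd z)).coeff (.ofAdd w) = c w := by
  classical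
  simp [coeff_sum, of_apply, Finsupp.single_apply]

theorem ZMod.sum_eq_sum_range {M : Type*} [AddCommMonoid M] (N : ℕ) [NeZero N]
    (f : ZMod N → M) : ∑ z, f z = ∑ k ∈ range N, f k :=
  (Finset.sum_nbij' (Nat.cast : ℕ → ZMod N) ZMod.val (fun _ _ => mem_univ _)
    (fun z _ => mem_range.2 z.val_lt) (fun _ hk => ZMod.val_cast_of_lt (mem_range.1 hk))
    (fun z _ => ZMod.natCast_zmod_val z) (fun _ _ => rfl)).symm

theorem ZMod.sum_eq_add_add_sum_Ico_neg {M : Type*} [AddCommMonoid M] {N m : ℕ} [NeZero N]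
    (hN : N = 2 * m) (f : ZMod N → M) :
    ∑ z, f z = f 0 + f m + ∑ j ∈ Ico 1 m, (f j + f (-j)) := by
  have hm : 0 < m := by have := NeZero.pos N; omega
  have hreflect : ∑ j ∈ Ico (m + 1) N, f j = ∑ j ∈ Ico 1 m, f (-j) :=
    calc ∑ j ∈ Ico (m + 1) N, f j = ∑ j ∈ Ico (N + 1 - m) (N + 1 - 1), f j := by
          rw [show N + 1 - m = m + 1 by omega, Nat.add_sub_cancel]
      _ = ∑ j ∈ Ico 1 m, f ↑(N - j) := (sum_Ico_reflect _ _ (by omega)).symm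
      _ = ∑ j ∈ Ico 1 m, f (-j) := sum_congr rfl fun j hj => by
          rw [Nat.cast_sub (by simp at hj; omega), ZMod.natCast_self, zero_sub]
  rw [ZMod.sum_eq_sum_range, range_eq_Ico, ← sum_Ico_consecutive _ (Nat.zero_le (m + 1))
    (by omega : m + 1 ≤ N), hreflect, sum_Ico_succ_top hm.le, ← sum_Ico_consecutive _
    (Nat.zero_le 1) hm, sum_add_distrib]
  simp only [Nat.Ico_succ_singleton, sum_singleton, Nat.cast_zero]
  abel

/-- For `x = Σ α_i a^i ∈ F₂C`, `C` cyclic of order `2^n`, `n ≥ 2`: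
`x x* = χ(x)·1 + Σ_{j=1}^{2^(n-1)-1} γ_j (a^j + a^(-j))` with
`γ_j = Σ_i α_i α_{i-j}`; in particular the coefficient of `a^(2^(n-1))` in `x x*`
is `0` and the coefficient of `1` is `χ(x)`. -/
theorem stmt6 (n : ℕ) (hn : 2 ≤ n) (α : ZMod (2 ^ n) → ZMod 2) :
    (∑ i : ZMod (2 ^ n), α i • Gel n i) * starOne n (∑ i : ZMod (2 ^ n), α i • Gel n i)
        = (∑ i : ZMod (2 ^ n), α i) • (1 : FC n)
          + ∑ j ∈ Finset.Ico (1 : ℕ) (2 ^ (n - 1)),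
              (∑ i : ZMod (2 ^ n), α i * α (i - (j : ZMod (2 ^ n))))
                • (Gel n (j : ZMod (2 ^ n)) + Gel n (-(j : ZMod (2 ^ n)))) ∧
    ((∑ i : ZMod (2 ^ n), α i • Gel n i) * starOne n (∑ i : ZMod (2 ^ n), α i • Gel n i)).coeff
        (Multiplicative.ofAdd ((2 ^ (n - 1) : ℕ) : ZMod (2 ^ n))) = 0 ∧
    ((∑ i : ZMod (2 ^ n), α i • Gel n i) * starOne n (∑ i : ZMod (2 ^ n), α i • Gel n i)).coeff
        (1 : Cgrp n) = ∑ i : ZMod (2 ^ n), α i := by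
  have hN : 2 ^ n = 2 * 2 ^ (n - 1) := by rw [← pow_succ']; congr; omega
  have hprod : (∑ i, α i • Gel n i) * starOne n (∑ i, α i • Gel n i)
      = ∑ z, autocorr α z • Gel n z :=
    MonoidAlgebra.sum_smul_of_mul_domCongr_inv α
  have hhalf : autocorr α ((2 ^ (n - 1) : ℕ) : ZMod (2 ^ n)) = 0 :=
    autocorr_eq_zero_of_add_self_eq_zero α
      (by rw [← Nat.cast_add, ← two_mul, ← hN, ZMod.natCast_self])
      ((ZMod.natCast_eq_zero_iff _ _).not.2 (Nat.not_dvd_of_pos_of_lt (by positivity)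
        (Nat.pow_lt_pow_right one_lt_two (by omega))))
  refine ⟨?_, ?_, ?_⟩
  · rw [hprod, ZMod.sum_eq_add_add_sum_Ico_neg hN, hhalf, zero_smul, add_zero, autocorr_zero,
      show Gel n 0 = 1 from map_one _]
    simp only [autocorr_neg, ← smul_add]
    rfl
  · rw [hprod]
    exact (MonoidAlgebra.coeff_sum_smul_of _ _).trans hhalf
  · rw [hprod]
    exact (MonoidAlgebra.coeff_sum_smul_of _ 0).trans (autocorr_zero α)

end
end

section
/- Let C = ⟨a⟩ be cyclic of order 2^n, n ≥ 3, and ⊛ the involution of F_2 C induced by a ↦ a^{2^{n-1}-1}. For x = Σ α_i a^i, the coefficient of 1 in x x^⊛ is Σ_{i even} α_i and the coefficient of a^{2^{n-1}} in x x^⊛ is Σ_{i odd} α_i. -/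
open MonoidAlgebra Finset

noncomputable section

/-! The automorphism `θ : a ↦ a^(2^(n-1)-1)` fixes `g = 1` and `g = a^(2^(n-1))`, so
`v ↦ g θ(v)⁻¹` is an involution of `C`, and the coefficient `Σ_v x_{g θ(v)⁻¹} x_v` of `g`
in `x x^⊛` is a sum over the orbits of this involution. In characteristic `2` the
two-element orbits cancel, leaving `Σ x_v² = Σ x_v` over the fixed points `v θ(v) = g`,
i.e. `v^(2^(n-1)) = g`: these are the even powers of `a` for `g = 1` and the odd ones for
`g = a^(2^(n-1))`. -/

theorem CharTwo.sum_comp_mul_eq_sum_fixed_sq {ι R : Type*} [Fintype ι] [DecidableEq ι]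
    [CommSemiring R] [CharP R 2] {σ : ι → ι} (hσ : σ.Involutive) (f : ι → R) :
    ∑ i, f (σ i) * f i = ∑ i with σ i = i, f i ^ 2 := by
  rw [← sum_filter_add_sum_filter_not univ (fun i => σ i = i)]
  have h_moved : ∑ i with σ i ≠ i, f (σ i) * f i = 0 := by
    refine sum_involution (fun i _ => σ i) (fun i _ => ?_)
      (fun i hi _ => (mem_filter.1 hi).2)
      (fun i hi => mem_filter.2
        ⟨mem_univ _, by simpa [hσ i, eq_comm] using (mem_filter.1 hi).2⟩)
      (fun i _ => hσ i)
    rw [hσ i, mul_comm (f i)]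
    exact CharTwo.add_self_eq_zero _
  rw [h_moved, add_zero]
  exact sum_congr rfl fun i hi => by rw [(mem_filter.1 hi).2, sq]

theorem MonoidAlgebra.coeff_mul_domCongr {R G : Type*} [CommSemiring R] [Group G] [Fintype G]
    (θ : G ≃* G) (x y : MonoidAlgebra R G) (g : G) :
    (x * domCongr R R θ y).coeff g = ∑ v, x.coeff (g * (θ v)⁻¹) * y.coeff v := by
  rw [coeff_mul_apply_right, Finsupp.sum_fintype _ _ (by simp)]
  exact Fintype.sum_equiv θ.symm.toEquiv _ _ (fun u => by simp)

theorem MonoidAlgebra.coeff_mul_domCongr_self_of_charTwo {R G : Type*} [CommSemiring R]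
    [CharP R 2] [CommGroup G] [Fintype G] [DecidableEq G] {θ : G ≃* G}
    (hθ : Function.Involutive θ) {g : G} (hg : θ g = g) (x : MonoidAlgebra R G) :
    (x * domCongr R R θ x).coeff g = ∑ v with v * θ v = g, x.coeff v ^ 2 := by
  have hσ : Function.Involutive fun v => g * (θ v)⁻¹ := fun v => by
    simp only [map_mul, map_inv, hθ v, hg, mul_inv_rev, inv_inv, mul_comm v, mul_inv_cancel_left]
  rw [coeff_mul_domCongr, CharTwo.sum_comp_mul_eq_sum_fixed_sq hσ]
  refine sum_congr (filter_congr fun v _ => ?_) fun _ _ => rfl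
  rw [mul_inv_eq_iff_eq_mul, eq_comm]

theorem ZMod.two_pow_pred_mul_natCast_eq_iff {n : ℕ} (hn : 1 ≤ n) (i b : ℕ) :
    (2 : ZMod (2 ^ n)) ^ (n - 1) * i = 2 ^ (n - 1) * b ↔ i ≡ b [MOD 2] := by
  have h2n : 2 ^ n = 2 ^ (n - 1) * 2 := by rw [← pow_succ, Nat.sub_add_cancel hn]
  rw [← Nat.ModEq.mul_left_cancel_iff' (c := 2 ^ (n - 1)) (by positivity), ← h2n,
    ← ZMod.natCast_eq_natCast_iff]
  push_cast
  rfl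

theorem Finset.sum_range_eq_sum_zmod_val {M : Type*} [AddCommMonoid M] (N : ℕ) [NeZero N]
    (f : ℕ → M) : ∑ i ∈ range N, f i = ∑ v : ZMod N, f v.val :=
  (sum_nbij' (fun v : ZMod N => v.val) (fun i => (i : ZMod N)) (fun v _ => by simp [ZMod.val_lt])
    (fun _ _ => mem_univ _) (fun v _ => ZMod.natCast_zmod_val v)
    (fun i hi => ZMod.val_cast_of_lt (mem_range.1 hi)) (fun _ _ => rfl)).symm

theorem theta_involutive (n : ℕ) (hn : 2 ≤ n) : Function.Involutive (theta n hn) :=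
  (theta n hn).symm_apply_apply

theorem cf_mul_two_pow_pred {n : ℕ} (hn : 2 ≤ n) : cf n * 2 ^ (n - 1) = 2 ^ (n - 1) := by
  have h_sq : (2 : ZMod (2 ^ n)) ^ (n - 1) * 2 ^ (n - 1) = 0 := by
    rw [← pow_add, show n - 1 + (n - 1) = n + (n - 2) by omega, pow_add, two_pow_zmod, zero_mul]
  have h_double : (2 : ZMod (2 ^ n)) ^ (n - 1) + 2 ^ (n - 1) = 0 := by
    rw [← two_mul, ← pow_succ', Nat.sub_add_cancel (by omega), two_pow_zmod]
  unfold cf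
  linear_combination h_sq - h_double

theorem theta_ofAdd_two_pow_pred_mul {n : ℕ} (hn : 2 ≤ n) (b : ZMod (2 ^ n)) :
    theta n hn (Multiplicative.ofAdd (2 ^ (n - 1) * b)) =
      Multiplicative.ofAdd (2 ^ (n - 1) * b) := by
  change Multiplicative.ofAdd (cf n * (2 ^ (n - 1) * b)) = _
  rw [← mul_assoc, cf_mul_two_pow_pred hn]

theorem mul_theta_self_eq_iff {n : ℕ} (hn : 2 ≤ n) (v : Cgrp n) (b : ℕ) :
    v * theta n hn v = Multiplicative.ofAdd (2 ^ (n - 1) * (b : ZMod (2 ^ n))) ↔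
      (Multiplicative.toAdd v).val ≡ b [MOD 2] := by
  have hv : v * theta n hn v =
      Multiplicative.ofAdd (2 ^ (n - 1) * (v.toAdd.val : ZMod (2 ^ n))) := by
    rw [ZMod.natCast_zmod_val]
    change Multiplicative.ofAdd (v.toAdd + cf n * v.toAdd) = _
    rw [cf]
    ring_nf
  rw [hv, Multiplicative.ofAdd.apply_eq_iff_eq, ZMod.two_pow_pred_mul_natCast_eq_iff (by omega)]

theorem coeff_mul_starTwo_self {n : ℕ} (hn : 2 ≤ n) (x : FC n) {g : Cgrp n}
    (hg : theta n hn g = g) :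
    (x * starTwo n hn x).coeff g = ∑ v with v * theta n hn v = g, x.coeff v := by
  rw [starTwo, coeff_mul_domCongr_self_of_charTwo (theta_involutive n hn) hg]
  simp only [ZMod.pow_card]

theorem A_pow (n i : ℕ) : A n ^ i = single (Multiplicative.ofAdd (i : ZMod (2 ^ n))) 1 := by
  rw [A, ← map_pow, of_apply, agen, ← ofAdd_nsmul, nsmul_one]

theorem coeff_sum_smul_A_pow (n : ℕ) (α : ℕ → ZMod 2) (z : ZMod (2 ^ n)) :
    (∑ i ∈ range (2 ^ n), α i • A n ^ i).coeff (Multiplicative.ofAdd z) = α z.val := by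
  simp only [A_pow, smul_single, smul_eq_mul, mul_one, coeff_sum, coeff_single]
  rw [Finset.sum_apply', sum_range_eq_sum_zmod_val]
  simp [Finsupp.single_apply]

theorem sum_filter_coeff_sum_smul_A_pow (n : ℕ) (α : ℕ → ZMod 2) (p : ℕ → Prop)
    [DecidablePred p] :
    ∑ v : Cgrp n with p (Multiplicative.toAdd v).val,
        (∑ i ∈ range (2 ^ n), α i • A n ^ i).coeff v =
      ∑ i ∈ range (2 ^ n) with p i, α i := by
  rw [sum_filter, sum_filter, sum_range_eq_sum_zmod_val (2 ^ n) fun i => if p i then α i else 0]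
  exact Fintype.sum_equiv Multiplicative.toAdd _ _ fun v => by
    rw [← coeff_sum_smul_A_pow n α, ofAdd_toAdd]

/-- For `C` cyclic of order `2^n`, `n ≥ 3`, and `x = Σ α_i a^i`, the coefficient of `1`
in `x x^⊛` is `Σ_{i even} α_i` and the coefficient of `a^(2^(n-1))` in `x x^⊛` is
`Σ_{i odd} α_i`. -/
theorem stmt7 (n : ℕ) (hn : 3 ≤ n) (α : ℕ → ZMod 2) :
    ((∑ i ∈ Finset.range (2 ^ n), α i • A n ^ i) *
        starTwo n (by omega) (∑ i ∈ Finset.range (2 ^ n), α i • A n ^ i)).coeff (1 : Cgrp n)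
      = ∑ i ∈ (Finset.range (2 ^ n)).filter (fun i => Even i), α i ∧
    ((∑ i ∈ Finset.range (2 ^ n), α i • A n ^ i) *
        starTwo n (by omega) (∑ i ∈ Finset.range (2 ^ n), α i • A n ^ i)).coeff
        (Multiplicative.ofAdd ((2 ^ (n - 1) : ℕ) : ZMod (2 ^ n)))
      = ∑ i ∈ (Finset.range (2 ^ n)).filter (fun i => Odd i), α i := by
  have hn2 : 2 ≤ n := by omega
  have coeff_eq (b : ℕ) :
      ((∑ i ∈ range (2 ^ n), α i • A n ^ i) *
          starTwo n hn2 (∑ i ∈ range (2 ^ n), α i • A n ^ i)).coeff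
          (Multiplicative.ofAdd (2 ^ (n - 1) * (b : ZMod (2 ^ n)))) =
        ∑ i ∈ range (2 ^ n) with i ≡ b [MOD 2], α i := by
    rw [coeff_mul_starTwo_self hn2 _ (theta_ofAdd_two_pow_pred_mul hn2 _),
      ← sum_filter_coeff_sum_smul_A_pow]
    exact sum_congr (filter_congr fun v _ => mul_theta_self_eq_iff hn2 v b) fun _ _ => rfl
  constructor
  · convert coeff_eq 0 using 2
    · simp
    · exact filter_congr fun i _ => Nat.even_iff
  · convert coeff_eq 1 using 2
    · simp
    · exact filter_congr fun i _ => Nat.odd_iff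
end
end

section
/- Let G be the generalized quaternion group Q_{2^{n+1}} = ⟨a, b | a^{2^n}=1, b²=a^{2^{n-1}}, bab^{-1}=a^{-1}⟩, n ≥ 2. Then V(F_2 G) contains no unit of order two of the form x₁ + x₂b with χ(x₁)=0 and χ(x₂)=1 (i.e., no unit of type 2 has order two). -/
/-!
Write `x = x₁ + x₂ b` and let `σ` be the involution of `F₂⟨a⟩` induced by `a ↦ a⁻¹`. Since
`b y = σ(y) b` and `b² = z := a^(2^(n-1))`, the equation `x² = 1` splits into
`x₁² + x₂ σ(x₂) z = 1` and `x₁ x₂ + x₂ σ(x₁) = 0`. As `⟨a⟩` is a `2`-group, `x₂^(2^n) = χ(x₂) = 1`,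
so `x₂` is a unit and `σ(x₁) = x₁`. Now compare coefficients of `1`: for `x₁² = x₁ σ(x₁)` it is
`∑ x₁(g)² = χ(x₁)² = 0`, and for `x₂ σ(x₂) z` it is `∑ x₂(g) x₂(z g) = 0`, since the terms at `g`
and `z g` cancel. Hence `0 = 1`.
-/

noncomputable section

/-- The cyclic subgroup `⟨a⟩` of the generalized quaternion group `Q_{2^(n+1)}`,
which has order `2 * 2^(n-1) = 2^n`. -/
abbrev CgrpQ (n : ℕ) : Type := Multiplicative (ZMod (2 * 2 ^ (n - 1)))

/-- The group algebra `F₂⟨a⟩`. -/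
abbrev FCQ (n : ℕ) : Type := MonoidAlgebra (ZMod 2) (CgrpQ n)

/-- The augmentation map `χ : F₂⟨a⟩ → F₂`. -/
def augQ (n : ℕ) : FCQ n →ₐ[ZMod 2] ZMod 2 :=
  MonoidAlgebra.lift (ZMod 2) (ZMod 2) (CgrpQ n) 1

/-- The embedding of `⟨a⟩` into the generalized quaternion group
`Q_{2^(n+1)} = QuaternionGroup (2^(n-1))`. -/
def aHom (n : ℕ) : CgrpQ n →* QuaternionGroup (2 ^ (n - 1)) where
  toFun i := QuaternionGroup.a i.toAdd
  map_one' := rfl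
  map_mul' _ _ := rfl

/-- The embedding `F₂⟨a⟩ → F₂Q` of group algebras. -/
def iotaQ (n : ℕ) : FCQ n →+* MonoidAlgebra (ZMod 2) (QuaternionGroup (2 ^ (n - 1))) :=
  MonoidAlgebra.mapDomainRingHom (ZMod 2) (aHom n)

/-- The element `b` of the generalized quaternion group inside the group algebra `F₂Q`. -/
def Bq (n : ℕ) : MonoidAlgebra (ZMod 2) (QuaternionGroup (2 ^ (n - 1))) :=
  MonoidAlgebra.of (ZMod 2) (QuaternionGroup (2 ^ (n - 1))) (QuaternionGroup.xa 0)

namespace MonoidAlgebra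

variable {R G : Type*}

instance charP [Semiring R] [Monoid G] (p : ℕ) [CharP R p] : CharP R[G] p :=
  charP_of_injective_ringHom (f := singleOneRingHom) single_right_injective p

theorem pow_char_pow_eq_single_one_lift [CommMonoid G] {p k : ℕ} [Fact p.Prime]
    (hG : ∀ g : G, g ^ p ^ k = 1) (y : (ZMod p)[G]) :
    y ^ p ^ k = single 1 (lift (ZMod p) (ZMod p) G 1 y) := by
  induction y using induction_linear with
  | zero => simp [zero_pow (pow_ne_zero k (Fact.out : p.Prime).ne_zero)]
  | add x y hx hy => rw [add_pow_char_pow, hx, hy, map_add, single_add]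
  | single g c => simp [single_pow, hG, ZMod.pow_card_pow, lift_single]

theorem isUnit_of_lift_one_ne_zero [CommMonoid G] {p k : ℕ} [Fact p.Prime]
    (hG : ∀ g : G, g ^ p ^ k = 1) {y : (ZMod p)[G]} (hy : lift (ZMod p) (ZMod p) G 1 y ≠ 0) :
    IsUnit y := by
  rw [← isUnit_pow_iff (pow_ne_zero k (Fact.out : p.Prime).ne_zero),
    pow_char_pow_eq_single_one_lift hG]
  exact hy.isUnit.map singleOneRingHom

theorem lift_one_eq_sum_coeff [CommSemiring R] [Monoid G] [Fintype G] (y : R[G]) :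
    lift R R G 1 y = ∑ g, y.coeff g := by
  rw [lift_apply, Finsupp.sum_fintype _ _ (by simp)]
  simp

variable (R G) in
-- For `G = ⟨a⟩` this is conjugation by `b` in `F₂Q`.
def inversion [Semiring R] [CommGroup G] : R[G] ≃+* R[G] :=
  mapDomainRingEquiv R (MulEquiv.inv G)

section CommGroup

variable [CommGroup G]

@[simp]
theorem coeff_inversion [Semiring R] (y : R[G]) (g : G) :
    (inversion R G y).coeff g = y.coeff g⁻¹ := by
  simp [inversion, Finsupp.equivMapDomain_apply]

@[simp]
theorem inversion_single [Semiring R] (g : G) (r : R) :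
    inversion R G (single g r) = single g⁻¹ r := by
  simp [inversion]

variable [CommRing R] [Fintype G]

theorem coeff_one_mul_inversion (y : R[G]) :
    (y * inversion R G y).coeff 1 = ∑ g, y.coeff g ^ 2 := by
  rw [coeff_mul_apply_left, Finsupp.sum_fintype _ _ (by simp)]
  simp [sq]

theorem coeff_one_mul_inversion_of_charTwo [CharP R 2] (y : R[G]) :
    (y * inversion R G y).coeff 1 = lift R R G 1 y ^ 2 := by
  rw [coeff_one_mul_inversion, lift_one_eq_sum_coeff, CharTwo.sum_sq]

theorem coeff_mul_inversion_eq_zero_of_charTwo [CharP R 2] {z : G} (hz : z * z = 1)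
    (hz₁ : z ≠ 1) (y : R[G]) : (y * inversion R G y).coeff z = 0 := by
  have hz_inv : z⁻¹ = z := inv_eq_of_mul_eq_one_right hz
  rw [coeff_mul_apply_left, Finsupp.sum_fintype _ _ (by simp)]
  simp only [coeff_inversion, mul_inv_rev, inv_inv, hz_inv]
  -- the terms at `g` and `z * g` are equal
  refine Finset.sum_ninvolution (z * ·) (fun g => ?_) (fun g _ => ?_) (fun _ => Finset.mem_univ _)
    (fun g => by rw [← mul_assoc, hz, one_mul])
  · rw [← mul_assoc, hz, one_mul, mul_comm (y.coeff g), mul_comm z, CharTwo.add_self_eq_zero]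
  · simpa using hz₁

end CommGroup

end MonoidAlgebra

open MonoidAlgebra QuaternionGroup

theorem ZMod.natCast_add_self_eq_zero (m : ℕ) : (m : ZMod (2 * m)) + m = 0 := by
  rw [← Nat.cast_add, ← two_mul, ZMod.natCast_self]

theorem QuaternionGroup.inv_xa {m : ℕ} (i : ZMod (2 * m)) :
    (xa i : QuaternionGroup m)⁻¹ = xa ((m : ZMod (2 * m)) + i) :=
  rfl

section Quaternion

variable (n : ℕ)

/-- `b² = a^(2^(n-1))`, the central involution of `Q_{2^(n+1)}`. -/
def centralQ : CgrpQ n := .ofAdd ((2 ^ (n - 1) : ℕ) : ZMod (2 * 2 ^ (n - 1)))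

theorem centralQ_mul_self : centralQ n * centralQ n = 1 :=
  ZMod.natCast_add_self_eq_zero _

theorem centralQ_ne_one : centralQ n ≠ 1 := by
  intro h
  have h0 : ((2 ^ (n - 1) : ℕ) : ZMod (2 * 2 ^ (n - 1))) = 0 := h
  rw [ZMod.natCast_eq_zero_iff] at h0
  have := Nat.le_of_dvd (by positivity) h0
  have := Nat.one_le_two_pow (n := n - 1)
  omega

theorem cgrpQ_pow_two_pow_eq_one (g : CgrpQ n) : g ^ 2 ^ (n - 1 + 1) = 1 := by
  apply Multiplicative.toAdd.injective
  rw [toAdd_pow, pow_succ', nsmul_eq_mul, ZMod.natCast_self, zero_mul, toAdd_one]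

theorem iotaQ_single (g : CgrpQ n) (c : ZMod 2) :
    iotaQ n (single g c) = single (a g.toAdd) c :=
  mapDomain_single

theorem coeff_iotaQ_a (y : FCQ n) (i : ZMod (2 * 2 ^ (n - 1))) :
    (iotaQ n y).coeff (a i) = y.coeff (.ofAdd i) :=
  Finsupp.mapDomain_apply (f := aHom n) (fun _ _ h => Multiplicative.toAdd.injective (a.inj h))
    y.coeff (.ofAdd i)

theorem coeff_iotaQ_xa (y : FCQ n) (i : ZMod (2 * 2 ^ (n - 1))) :
    (iotaQ n y).coeff (xa i) = 0 :=
  Finsupp.mapDomain_of_notMem_range _ _ (by rintro ⟨g, hg⟩; cases hg)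

theorem coeff_iotaQ_mul_Bq_a (y : FCQ n) (i : ZMod (2 * 2 ^ (n - 1))) :
    (iotaQ n y * Bq n).coeff (a i) = 0 := by
  rw [Bq, of_apply, coeff_mul_single_apply, inv_xa, a_mul_xa, coeff_iotaQ_xa, zero_mul]

theorem coeff_iotaQ_mul_Bq_xa (y : FCQ n) (i : ZMod (2 * 2 ^ (n - 1))) :
    (iotaQ n y * Bq n).coeff (xa i) = y.coeff (.ofAdd (-i)) := by
  rw [Bq, of_apply, coeff_mul_single_apply, inv_xa, xa_mul_xa, add_zero,
    ZMod.natCast_add_self_eq_zero, zero_sub, coeff_iotaQ_a, mul_one]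

theorem iotaQ_add_iotaQ_mul_Bq_inj {u v u' v' : FCQ n} :
    iotaQ n u + iotaQ n v * Bq n = iotaQ n u' + iotaQ n v' * Bq n ↔ u = u' ∧ v = v' := by
  refine ⟨fun h => ⟨ext (Finsupp.ext fun g => ?_), ext (Finsupp.ext fun g => ?_)⟩,
    fun ⟨hu, hv⟩ => hu ▸ hv ▸ rfl⟩
  · simpa [coeff_iotaQ_a, coeff_iotaQ_mul_Bq_a] using congr(($h).coeff (a g.toAdd))
  · simpa [coeff_iotaQ_xa, coeff_iotaQ_mul_Bq_xa] using congr(($h).coeff (xa (-g.toAdd)))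

theorem Bq_mul_iotaQ (y : FCQ n) : Bq n * iotaQ n y = iotaQ n (inversion _ _ y) * Bq n := by
  induction y using induction_linear with
  | zero => simp
  | add x y hx hy => simp only [map_add, mul_add, add_mul, hx, hy]
  | single g c => simp [Bq, iotaQ_single]

theorem Bq_mul_Bq : Bq n * Bq n = iotaQ n (single (centralQ n) 1) := by
  simp [Bq, iotaQ_single, centralQ]

theorem sq_iotaQ_add_iotaQ_mul_Bq (u v : FCQ n) :
    (iotaQ n u + iotaQ n v * Bq n) ^ 2 =
      iotaQ n (u ^ 2 + v * inversion _ _ v * single (centralQ n) 1) +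
        iotaQ n (u * v + v * inversion _ _ u) * Bq n := by
  have hvBu : iotaQ n v * Bq n * iotaQ n u = iotaQ n (v * inversion _ _ u) * Bq n := by
    rw [mul_assoc, Bq_mul_iotaQ, ← mul_assoc, ← map_mul]
  have hvBvB : iotaQ n v * Bq n * (iotaQ n v * Bq n) =
      iotaQ n (v * inversion _ _ v * single (centralQ n) 1) := by
    rw [mul_assoc, ← mul_assoc (Bq n), Bq_mul_iotaQ, mul_assoc, Bq_mul_Bq, ← map_mul, ← map_mul,
      ← mul_assoc]
  rw [sq, add_mul, mul_add, mul_add, hvBu, hvBvB]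
  simp only [map_add, map_mul, add_mul, sq, mul_assoc]
  abel

end Quaternion

theorem stmt14_general (n : ℕ) :
    ¬ ∃ x₁ x₂ : FCQ n, augQ n x₁ = 0 ∧ augQ n x₂ = 1 ∧
        (iotaQ n x₁ + iotaQ n x₂ * Bq n) ^ 2 = 1 := by
  rintro ⟨x₁, x₂, hx₁, hx₂, hsq⟩
  set σ := inversion (ZMod 2) (CgrpQ n)
  set z : FCQ n := single (centralQ n) 1
  have hsq' : iotaQ n (x₁ ^ 2 + x₂ * σ x₂ * z) + iotaQ n (x₁ * x₂ + x₂ * σ x₁) * Bq n =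
      iotaQ n 1 + iotaQ n 0 * Bq n := by
    rw [← sq_iotaQ_add_iotaQ_mul_Bq, hsq, map_one, map_zero, zero_mul, add_zero]
  obtain ⟨hu, hv⟩ := (iotaQ_add_iotaQ_mul_Bq_inj n).1 hsq'
  have hx₂_unit : IsUnit x₂ :=
    isUnit_of_lift_one_ne_zero (cgrpQ_pow_two_pow_eq_one n) (hx₂.trans_ne one_ne_zero)
  have hσx₁ : σ x₁ = x₁ := by
    have h : x₂ * (x₁ + σ x₁) = 0 := by rw [← hv]; ring
    rw [hx₂_unit.mul_right_eq_zero, CharTwo.add_eq_zero] at h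
    exact h.symm
  have h₁ : (x₁ ^ 2).coeff 1 = 0 := by
    rw [sq, ← congrArg (x₁ * ·) hσx₁, coeff_one_mul_inversion_of_charTwo]
    change augQ n x₁ ^ 2 = 0
    rw [hx₁, zero_pow two_ne_zero]
  have h₂ : (x₂ * σ x₂ * z).coeff 1 = 0 := by
    rw [coeff_mul_single_apply, one_mul, inv_eq_of_mul_eq_one_right (centralQ_mul_self n), mul_one,
      coeff_mul_inversion_eq_zero_of_charTwo (centralQ_mul_self n) (centralQ_ne_one n)]
  simpa [h₁, h₂] using congr(($hu).coeff 1)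

/-- In the group algebra over `F₂` of the generalized quaternion group `Q_{2^(n+1)}`, `n ≥ 2`,
there is no unit of order two of type 2, i.e. no element `x = x₁ + x₂b` with `χ(x₁) = 0`,
`χ(x₂) = 1` and `x² = 1`. -/
theorem stmt14 (n : ℕ) (hn : 2 ≤ n) :
    ¬ ∃ x₁ x₂ : FCQ n, augQ n x₁ = 0 ∧ augQ n x₂ = 1 ∧
        (iotaQ n x₁ + iotaQ n x₂ * Bq n) ^ 2 = 1 :=
  stmt14_general n

end
end

section
/- Let C be cyclic of order 2^n, n ≥ 2, with involution * induced by a ↦ a^{-1}. Let J* = { z z* : z ∈ V(F_2 C), z z* ∈ F_2 C² } and S_*(C) the group of *-symmetric normalized units. Then J* = S_*(C)², and |J*| = 2^{2^{n-2}-1}. -/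
/-!
Let `t = a ^ 2^(n-1)` be the element of order two. Both sides equal the set of `y` supported on
`C²` with `y* = y`, `y(1) = 1` and `y(t) = 0`. For `y = z z*` the terms `z(g) z(t g)` of `y(t)`
cancel in pairs `g ↔ t g`, and since `y` is symmetric its augmentation `1` is `y(1) + y(t)`.
Conversely, in characteristic two `(s²)(h²) = s(h) + s(h t)`, so putting `s(h) = y(h²)` on an
inversion-stable half of `C` gives a symmetric square root of `y`; it is a unit because its
augmentation is `1` and the augmentation ideal of `F₂C` is nil. Such a `y` is determined by its
coefficients at `a², a⁴, …, a^(2^(n-1)-2)`, which are arbitrary: hence `2^(2^(n-2)-1)` elements.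
-/

open MonoidAlgebra Finset

noncomputable section

theorem CharTwo.sum_eq_sum_fixed_of_involutive {R ι : Type*} [Ring R] [CharP R 2] [Fintype ι]
    [DecidableEq ι] (σ : ι → ι) (hσ : Function.Involutive σ) (f : ι → R)
    (hf : ∀ i, f (σ i) = f i) :
    ∑ i, f i = ∑ i with σ i = i, f i := by
  rw [← Finset.sum_filter_add_sum_filter_not Finset.univ (fun i => σ i = i), add_eq_left]
  refine Finset.sum_involution (fun i _ => σ i)
    (fun i _ => by rw [hf]; exact CharTwo.add_self_eq_zero _)
    (fun i hi _ => (Finset.mem_filter.mp hi).2) (fun i hi => by simpa [hσ i, eq_comm] using hi)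
    (fun i _ => hσ i)

namespace MonoidAlgebra

theorem mem_span_range_of_mul_self_iff {R M : Type*} [CommSemiring R] [Monoid M]
    (y : MonoidAlgebra R M) :
    y ∈ Submodule.span R (Set.range fun g : M => of R M (g * g)) ↔
      ∀ k, ¬IsSquare k → y.coeff k = 0 := by
  have : (Set.range fun g : M => of R M (g * g)) = (fun k => single k 1) '' {k | IsSquare k} := by
    ext; simp [IsSquare, eq_comm]
  rw [this, ← supported_eq_span_single, mem_supported']
  rfl

variable {R G : Type*} [CommRing R] [CommGroup G] [Fintype G]

theorem coeff_mul_eq_sum (x y : MonoidAlgebra R G) (k : G) :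
    (x * y).coeff k = ∑ g, x.coeff g * y.coeff (g⁻¹ * k) := by
  rw [coeff_mul_apply_left, Finsupp.sum_fintype _ _ fun _ => zero_mul _]

variable [CharP R 2]

theorem isNilpotent_of_sum_coeff_eq_zero {m : ℕ} (hG : Fintype.card G = 2 ^ m)
    (x : MonoidAlgebra R G) (hx : ∑ g, x.coeff g = 0) : IsNilpotent x := by
  have : CharP (MonoidAlgebra R G) 2 := charP_of_injective_algebraMap' R 2
  refine ⟨2 ^ m, ?_⟩
  calc x ^ 2 ^ m = (∑ g, single g (x.coeff g)) ^ 2 ^ m := by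
        rw [← Finsupp.sum_fintype _ _ fun _ => single_zero _, sum_coeff_single]
    _ = ∑ g, single 1 (x.coeff g ^ 2 ^ m) := by
        rw [sum_pow_char_pow]
        refine Finset.sum_congr rfl fun g _ => ?_
        rw [single_pow, ← hG, pow_card_eq_one]
    _ = single 1 ((∑ g, x.coeff g) ^ 2 ^ m) := by
        rw [sum_pow_char_pow]
        exact (map_sum (singleAddHom 1) _ _).symm
    _ = 0 := by rw [hx, zero_pow (by positivity), single_zero]

variable [DecidableEq G]

theorem coeff_mul_self (x : MonoidAlgebra R G) (k : G) :
    (x * x).coeff k = ∑ g with g * g = k, x.coeff g ^ 2 := by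
  rw [coeff_mul_eq_sum, CharTwo.sum_eq_sum_fixed_of_involutive (fun g => g⁻¹ * k)
    (fun g => by simp) _ (fun g => by simp [mul_comm])]
  refine Finset.sum_congr (Finset.filter_congr fun g _ => by rw [inv_mul_eq_iff_eq_mul, eq_comm])
    fun g hg => ?_
  rw [← (Finset.mem_filter.mp hg).2, inv_mul_cancel_left, sq]

theorem coeff_mul_self_eq_zero_of_not_isSquare (x : MonoidAlgebra R G) {k : G}
    (hk : ¬IsSquare k) : (x * x).coeff k = 0 := by
  rw [coeff_mul_self]
  exact Finset.sum_eq_zero fun g hg => absurd ⟨g, (Finset.mem_filter.mp hg).2.symm⟩ hk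

theorem coeff_mul_eq_zero_of_coeff_eq_coeff_inv (z w : MonoidAlgebra R G)
    (hw : ∀ g, w.coeff g = z.coeff g⁻¹) {t : G} (ht : t * t = 1) (ht1 : t ≠ 1) :
    (z * w).coeff t = 0 := by
  have ht' : t⁻¹ = t := inv_eq_of_mul_eq_one_right ht
  -- the terms at `g` and `t * g` coincide
  rw [coeff_mul_eq_sum, CharTwo.sum_eq_sum_fixed_of_involutive (t * ·)
    (fun g => by simp [← mul_assoc, ht]) _ (fun g => by simp [hw, ← mul_assoc, ht, ht', mul_comm])]
  refine Finset.sum_eq_zero fun g hg => absurd (Finset.mem_filter.mp hg).2 ?_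
  simpa using ht1

end MonoidAlgebra

namespace Cgrp

variable {n : ℕ}

def ordTwo (n : ℕ) : Cgrp n := Multiplicative.ofAdd (2 ^ (n - 1) : ZMod (2 ^ n))

/-- The exponent `i ∈ [0, 2^n)` with `g = a ^ i`. -/
def dlog (g : Cgrp n) : ℕ := (Multiplicative.toAdd g).val

theorem dlog_lt (g : Cgrp n) : dlog g < 2 ^ n := ZMod.val_lt _

theorem dlog_inj {g h : Cgrp n} : dlog g = dlog h ↔ g = h :=
  (ZMod.val_injective _).eq_iff

@[simp] theorem dlog_one : dlog (1 : Cgrp n) = 0 := ZMod.val_zero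

theorem dlog_ofAdd_natCast {r : ℕ} (hr : r < 2 ^ n) :
    dlog (Multiplicative.ofAdd (r : ZMod (2 ^ n))) = r :=
  ZMod.val_cast_of_lt hr

theorem dlog_ordTwo (hn : 1 ≤ n) : dlog (ordTwo n) = 2 ^ (n - 1) := by
  have := mul_pow_sub_one (by omega : n ≠ 0) 2
  have := Nat.one_le_two_pow (n := n - 1)
  have h := dlog_ofAdd_natCast (n := n) (r := 2 ^ (n - 1)) (by omega)
  rwa [Nat.cast_pow, Nat.cast_ofNat] at h

theorem dlog_mul (g h : Cgrp n) :
    dlog (g * h) =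
      if dlog g + dlog h < 2 ^ n then dlog g + dlog h else dlog g + dlog h - 2 ^ n := by
  split_ifs with hlt
  · exact ZMod.val_add_of_lt hlt
  · exact ZMod.val_add_of_le (not_lt.mp hlt)

theorem dlog_inv (g : Cgrp n) : dlog g⁻¹ = if dlog g = 0 then 0 else 2 ^ n - dlog g := by
  simp only [dlog, toAdd_inv, ZMod.neg_val, ZMod.val_eq_zero]

theorem two_pow_eq_four_mul (hn : 2 ≤ n) :
    2 ^ n = 4 * 2 ^ (n - 2) ∧ 2 ^ (n - 1) = 2 * 2 ^ (n - 2) := by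
  obtain ⟨m, rfl⟩ := Nat.exists_eq_add_of_le' hn
  constructor <;> simp [pow_succ] <;> ring

theorem inv_eq_self_iff (hn : 1 ≤ n) (g : Cgrp n) : g⁻¹ = g ↔ g = 1 ∨ g = ordTwo n := by
  have := mul_pow_sub_one (by omega : n ≠ 0) 2
  have := dlog_lt g
  simp only [← dlog_inj, dlog_inv, dlog_one, dlog_ordTwo hn]
  split_ifs <;> omega

theorem ordTwo_ne_one (hn : 1 ≤ n) : ordTwo n ≠ 1 := by
  rw [ne_eq, ← dlog_inj, dlog_ordTwo hn, dlog_one]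
  positivity

theorem ordTwo_mul_self (hn : 1 ≤ n) : ordTwo n * ordTwo n = 1 :=
  mul_eq_one_iff_inv_eq.mpr ((inv_eq_self_iff hn _).mpr (Or.inr rfl))

theorem mul_self_eq_mul_self_iff (hn : 1 ≤ n) (g h : Cgrp n) :
    g * g = h * h ↔ g = h ∨ g = h * ordTwo n := by
  rw [← div_eq_one, ← div_mul_div_comm, mul_eq_one_iff_inv_eq, inv_eq_self_iff hn, div_eq_one,
    div_eq_iff_eq_mul, mul_comm]

theorem even_dlog_of_isSquare (hn : 1 ≤ n) {k : Cgrp n} (hk : IsSquare k) : Even (dlog k) := by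
  obtain ⟨g, rfl⟩ := hk
  have := mul_pow_sub_one (by omega : n ≠ 0) 2
  have := dlog_lt g
  rw [dlog_mul]
  split_ifs <;> exact Nat.even_iff.mpr (by omega)

/-- `h` lies on the arc `a ^ (-2^(n-2)), …, a ^ (2^(n-2))`. -/
def InArc (h : Cgrp n) : Prop := dlog h ≤ 2 ^ (n - 2) ∨ 3 * 2 ^ (n - 2) ≤ dlog h

instance : DecidablePred (InArc (n := n)) := fun _ => instDecidableOr

theorem inArc_one : InArc (1 : Cgrp n) := by
  simp [InArc]

theorem inArc_inv (hn : 2 ≤ n) (h : Cgrp n) : InArc h⁻¹ ↔ InArc h := by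
  have := dlog_lt h
  have := two_pow_eq_four_mul hn
  unfold InArc
  rw [dlog_inv]
  split_ifs <;> omega

theorem not_inArc_ordTwo (hn : 2 ≤ n) : ¬InArc (ordTwo n) := by
  have := two_pow_eq_four_mul hn
  have := Nat.one_le_two_pow (n := n - 2)
  unfold InArc
  rw [dlog_ordTwo (by omega)]
  omega

theorem inArc_mul_ordTwo_iff (hn : 2 ≤ n) {h : Cgrp n} (hh : h * h ≠ ordTwo n) :
    InArc (h * ordTwo n) ↔ ¬InArc h := by
  have := dlog_lt h
  have := two_pow_eq_four_mul hn
  rw [ne_eq, ← dlog_inj, dlog_mul, dlog_ordTwo (by omega)] at hh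
  unfold InArc
  rw [dlog_mul, dlog_ordTwo (by omega)]
  split_ifs at * <;> omega

def evenPow (i : Fin (2 ^ (n - 2) - 1)) : Cgrp n :=
  Multiplicative.ofAdd ((2 * (i + 1) : ℕ) : ZMod (2 ^ n))

theorem isSquare_evenPow (i : Fin (2 ^ (n - 2) - 1)) : IsSquare (evenPow i) :=
  ⟨Multiplicative.ofAdd ((i + 1 : ℕ) : ZMod (2 ^ n)), by
    rw [evenPow, ← ofAdd_add]; push_cast; ring_nf⟩

theorem dlog_evenPow (hn : 2 ≤ n) (i : Fin (2 ^ (n - 2) - 1)) :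
    dlog (evenPow i) = 2 * (i + 1) := by
  have := two_pow_eq_four_mul hn
  exact dlog_ofAdd_natCast (by omega)

theorem dlog_inv_evenPow (hn : 2 ≤ n) (i : Fin (2 ^ (n - 2) - 1)) :
    dlog (evenPow i)⁻¹ = 2 ^ n - 2 * (i + 1) := by
  rw [dlog_inv, dlog_evenPow hn, if_neg (by omega)]

theorem evenPow_ne_one (hn : 2 ≤ n) (i : Fin (2 ^ (n - 2) - 1)) : evenPow i ≠ 1 := by
  rw [ne_eq, ← dlog_inj, dlog_evenPow hn, dlog_one]
  omega

theorem evenPow_ne_ordTwo (hn : 2 ≤ n) (i : Fin (2 ^ (n - 2) - 1)) : evenPow i ≠ ordTwo n := by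
  have := two_pow_eq_four_mul hn
  rw [ne_eq, ← dlog_inj, dlog_evenPow hn, dlog_ordTwo (by omega)]
  omega

theorem inv_evenPow_ne_ordTwo (hn : 2 ≤ n) (i : Fin (2 ^ (n - 2) - 1)) :
    (evenPow i)⁻¹ ≠ ordTwo n := by
  have := two_pow_eq_four_mul hn
  rw [ne_eq, ← dlog_inj, dlog_inv_evenPow hn, dlog_ordTwo (by omega)]
  omega

theorem evenPow_inj (hn : 2 ≤ n) {i j : Fin (2 ^ (n - 2) - 1)} :
    evenPow i = evenPow j ↔ i = j := by
  rw [← dlog_inj, dlog_evenPow hn, dlog_evenPow hn, Fin.ext_iff]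
  omega

theorem inv_evenPow_ne_evenPow (hn : 2 ≤ n) (i j : Fin (2 ^ (n - 2) - 1)) :
    (evenPow i)⁻¹ ≠ evenPow j := by
  have := two_pow_eq_four_mul hn
  rw [ne_eq, ← dlog_inj, dlog_inv_evenPow hn, dlog_evenPow hn]
  omega

theorem exists_evenPow (hn : 2 ≤ n) {k : Cgrp n} (hk : IsSquare k) (h1 : k ≠ 1)
    (ht : k ≠ ordTwo n) : ∃ i, k = evenPow i ∨ k⁻¹ = evenPow i := by
  have := two_pow_eq_four_mul hn
  have := dlog_lt k
  obtain ⟨m, hm⟩ := even_dlog_of_isSquare (by omega) hk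
  rw [ne_eq, ← dlog_inj, dlog_one] at h1
  rw [ne_eq, ← dlog_inj, dlog_ordTwo (by omega)] at ht
  rcases Nat.lt_or_gt_of_ne ht with hlt | hgt
  · refine ⟨⟨m - 1, by omega⟩, Or.inl ?_⟩
    rw [← dlog_inj, dlog_evenPow hn, Fin.val_mk]
    omega
  · refine ⟨⟨2 * 2 ^ (n - 2) - m - 1, by omega⟩, Or.inr ?_⟩
    rw [← dlog_inj, dlog_evenPow hn, dlog_inv, if_neg h1, Fin.val_mk]
    omega

end Cgrp

namespace FC

open Cgrp

variable {n : ℕ}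

theorem coeff_starOne (x : FC n) (k : Cgrp n) : (starOne n x).coeff k = x.coeff k⁻¹ := by
  simp [starOne, coeff_domCongr]

theorem starOne_starOne (x : FC n) : starOne n (starOne n x) = x := by
  ext k; rw [coeff_starOne, coeff_starOne, inv_inv]

theorem aug_eq_sum_coeff (x : FC n) : aug n x = ∑ g, x.coeff g := by
  rw [aug, MonoidAlgebra.lift_apply, Finsupp.sum_fintype] <;> simp

theorem aug_starOne (x : FC n) : aug n (starOne n x) = aug n x := by
  simp only [aug_eq_sum_coeff, coeff_starOne]
  exact Fintype.sum_equiv (Equiv.inv _) _ _ fun _ => rfl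

theorem aug_eq_coeff_one_add_coeff_ordTwo (hn : 1 ≤ n) (x : FC n)
    (hx : ∀ k, x.coeff k⁻¹ = x.coeff k) : aug n x = x.coeff 1 + x.coeff (ordTwo n) := by
  have hfix : ({g | g⁻¹ = g} : Finset (Cgrp n)) = {1, ordTwo n} := by
    ext g; simp [inv_eq_self_iff hn]
  rw [aug_eq_sum_coeff, CharTwo.sum_eq_sum_fixed_of_involutive _ inv_involutive _ hx, hfix,
    Finset.sum_pair (ordTwo_ne_one hn).symm]

theorem coeff_mul_self_mul_self (hn : 1 ≤ n) (x : FC n) (h : Cgrp n) :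
    (x * x).coeff (h * h) = x.coeff h + x.coeff (h * ordTwo n) := by
  have hroots : ({g | g * g = h * h} : Finset (Cgrp n)) = {h, h * ordTwo n} := by
    ext g; simp [mul_self_eq_mul_self_iff hn]
  have hne : h ≠ h * ordTwo n := fun e => ordTwo_ne_one hn (by simpa using e.symm)
  rw [MonoidAlgebra.coeff_mul_self, hroots, Finset.sum_pair hne, ZMod.pow_card, ZMod.pow_card]

theorem isUnit_of_aug_eq_one {x : FC n} (hx : aug n x = 1) : IsUnit x := by
  have hnil : IsNilpotent (x - 1) := by
    refine MonoidAlgebra.isNilpotent_of_sum_coeff_eq_zero (m := n) (by simp) _ ?_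
    rw [← aug_eq_sum_coeff, map_sub, hx, map_one, sub_self]
  simpa using hnil.isUnit_one_add

theorem mem_sqSpan_iff (y : FC n) : y ∈ sqSpan n ↔ ∀ k, ¬IsSquare k → y.coeff k = 0 :=
  MonoidAlgebra.mem_span_range_of_mul_self_iff y

theorem mul_self_mem_sqSpan (x : FC n) : x * x ∈ sqSpan n :=
  (mem_sqSpan_iff _).mpr fun _ hk => MonoidAlgebra.coeff_mul_self_eq_zero_of_not_isSquare x hk

end FC

open Cgrp FC

/-- The coefficientwise description of `J*`. -/
def jStar (n : ℕ) : Set (FC n) :=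
  {y | (∀ k, ¬IsSquare k → y.coeff k = 0) ∧ (∀ k, y.coeff k⁻¹ = y.coeff k) ∧
    y.coeff (ordTwo n) = 0 ∧ y.coeff 1 = 1}

variable {n : ℕ}

theorem mul_starOne_mem_jStar (hn : 1 ≤ n) {z : FC n} (hz : aug n z = 1)
    (hsq : z * starOne n z ∈ sqSpan n) : z * starOne n z ∈ jStar n := by
  have hsymm : ∀ k, (z * starOne n z).coeff k⁻¹ = (z * starOne n z).coeff k := by
    intro k
    rw [← coeff_starOne, map_mul, starOne_starOne, mul_comm]
  have ht : (z * starOne n z).coeff (ordTwo n) = 0 :=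
    MonoidAlgebra.coeff_mul_eq_zero_of_coeff_eq_coeff_inv _ _ (coeff_starOne z)
      (ordTwo_mul_self hn) (ordTwo_ne_one hn)
  have haug : aug n (z * starOne n z) = 1 := by rw [map_mul, aug_starOne, hz, one_mul]
  refine ⟨(mem_sqSpan_iff _).mp hsq, hsymm, ht, ?_⟩
  rwa [aug_eq_coeff_one_add_coeff_ordTwo hn _ hsymm, ht, add_zero] at haug

/-- Of the two square roots `h`, `h * ordTwo n` of a square, this keeps the one on the arc,
which is stable under inversion. -/
def sqrtJ (y : FC n) : FC n :=
  MonoidAlgebra.ofCoeff (Finsupp.equivFunOnFinite.symm fun h =>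
    if InArc h then y.coeff (h * h) else 0)

theorem coeff_sqrtJ (y : FC n) (h : Cgrp n) :
    (sqrtJ y).coeff h = if InArc h then y.coeff (h * h) else 0 := rfl

theorem coeff_sqrtJ_inv (hn : 2 ≤ n) {y : FC n} (hy : y ∈ jStar n) (k : Cgrp n) :
    (sqrtJ y).coeff k⁻¹ = (sqrtJ y).coeff k := by
  simp only [coeff_sqrtJ, inArc_inv hn, ← mul_inv, hy.2.1]

theorem aug_sqrtJ (hn : 2 ≤ n) {y : FC n} (hy : y ∈ jStar n) : aug n (sqrtJ y) = 1 := by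
  rw [aug_eq_coeff_one_add_coeff_ordTwo (by omega) _ (coeff_sqrtJ_inv hn hy), coeff_sqrtJ,
    coeff_sqrtJ, if_pos inArc_one, if_neg (not_inArc_ordTwo hn), mul_one, hy.2.2.2, add_zero]

theorem sqrtJ_mul_self (hn : 2 ≤ n) {y : FC n} (hy : y ∈ jStar n) : sqrtJ y * sqrtJ y = y := by
  ext k
  by_cases hk : IsSquare k
  · obtain ⟨h, rfl⟩ := hk
    rw [coeff_mul_self_mul_self (by omega), coeff_sqrtJ, coeff_sqrtJ,
      show h * ordTwo n * (h * ordTwo n) = h * h by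
        rw [mul_mul_mul_comm, ordTwo_mul_self (by omega), mul_one]]
    by_cases hh : h * h = ordTwo n
    · simp [hh, hy.2.2.1]
    · by_cases hA : InArc h <;> simp [hA, inArc_mul_ordTwo_iff hn hh]
  · rw [MonoidAlgebra.coeff_mul_self_eq_zero_of_not_isSquare _ hk, hy.1 k hk]

theorem exists_symm_unit_of_mem_jStar (hn : 2 ≤ n) {y : FC n} (hy : y ∈ jStar n) :
    ∃ s : (FC n)ˣ, aug n (s : FC n) = 1 ∧ starOne n (s : FC n) = s ∧ y = s * s := by
  have haug := aug_sqrtJ hn hy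
  refine ⟨(isUnit_of_aug_eq_one haug).unit, haug, ?_, (sqrtJ_mul_self hn hy).symm⟩
  ext k
  rw [IsUnit.unit_spec, coeff_starOne, coeff_sqrtJ_inv hn hy]

def jStarOfFun (v : Fin (2 ^ (n - 2) - 1) → ZMod 2) : FC n :=
  1 + ∑ i, v i • (of (ZMod 2) (Cgrp n) (evenPow i) + of (ZMod 2) (Cgrp n) (evenPow i)⁻¹)

theorem coeff_jStarOfFun (v : Fin (2 ^ (n - 2) - 1) → ZMod 2) (k : Cgrp n) :
    (jStarOfFun v).coeff k = (if 1 = k then 1 else 0) +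
      ∑ i, ((if evenPow i = k then v i else 0) + if (evenPow i)⁻¹ = k then v i else 0) := by
  simp [jStarOfFun, MonoidAlgebra.one_def, MonoidAlgebra.coeff_sum, Finsupp.single_apply]

theorem jStarOfFun_mem (hn : 2 ≤ n) (v : Fin (2 ^ (n - 2) - 1) → ZMod 2) :
    jStarOfFun v ∈ jStar n := by
  refine ⟨fun k hk => ?_, fun k => ?_, ?_, ?_⟩
  · have h1 : (1 : Cgrp n) ≠ k := fun e => hk (e ▸ IsSquare.one)
    have hpow : ∀ i, evenPow i ≠ k := fun i e => hk (e ▸ isSquare_evenPow i)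
    have hinv : ∀ i, (evenPow i)⁻¹ ≠ k := fun i e => hk (e ▸ (isSquare_evenPow i).inv)
    simp [coeff_jStarOfFun, h1, hpow, hinv]
  · simp only [coeff_jStarOfFun, ← inv_eq_iff_eq_inv, inv_one, inv_inv, add_comm]
  · have h1 : 1 ≠ ordTwo n := (ordTwo_ne_one (by omega)).symm
    simp [coeff_jStarOfFun, h1, evenPow_ne_ordTwo hn, inv_evenPow_ne_ordTwo hn]
  · simp [coeff_jStarOfFun, evenPow_ne_one hn]

theorem coeff_jStarOfFun_evenPow (hn : 2 ≤ n) (v : Fin (2 ^ (n - 2) - 1) → ZMod 2)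
    (j : Fin (2 ^ (n - 2) - 1)) : (jStarOfFun v).coeff (evenPow j) = v j := by
  simp [coeff_jStarOfFun, (evenPow_ne_one hn j).symm, evenPow_inj hn, inv_evenPow_ne_evenPow hn]

theorem eq_of_coeff_evenPow_eq (hn : 2 ≤ n) {y y' : FC n} (hy : y ∈ jStar n)
    (hy' : y' ∈ jStar n) (h : ∀ i, y.coeff (evenPow i) = y'.coeff (evenPow i)) : y = y' := by
  ext k
  by_cases hk : IsSquare k
  · by_cases h1 : k = 1
    · rw [h1, hy.2.2.2, hy'.2.2.2]
    by_cases ht : k = ordTwo n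
    · rw [ht, hy.2.2.1, hy'.2.2.1]
    obtain ⟨i, rfl | hi⟩ := exists_evenPow hn hk h1 ht
    · exact h i
    · rw [← hy.2.1, ← hy'.2.1, hi, h i]
  · rw [hy.1 k hk, hy'.1 k hk]

def jStarEquiv (hn : 2 ≤ n) : jStar n ≃ (Fin (2 ^ (n - 2) - 1) → ZMod 2) where
  toFun y i := (y : FC n).coeff (evenPow i)
  invFun v := ⟨jStarOfFun v, jStarOfFun_mem hn v⟩
  left_inv y := Subtype.ext <|
    eq_of_coeff_evenPow_eq hn (jStarOfFun_mem hn _) y.2 (coeff_jStarOfFun_evenPow hn _)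
  right_inv v := funext (coeff_jStarOfFun_evenPow hn v)

theorem card_jStar (hn : 2 ≤ n) : Nat.card (jStar n) = 2 ^ (2 ^ (n - 2) - 1) := by
  rw [Nat.card_congr (jStarEquiv hn), Nat.card_fun, Nat.card_zmod, Nat.card_eq_fintype_card,
    Fintype.card_fin]

/-- For `C` cyclic of order `2^n`, `n ≥ 2`, with involution `*`:
`J* = { z z* : z ∈ V(F₂C), z z* ∈ F₂C² }` equals the group of squares of the group
`S_*(C)` of `*`-symmetric normalized units, and `|J*| = 2^(2^(n-2)-1)`. -/
theorem stmt17 (n : ℕ) (hn : 2 ≤ n) :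
    {y : FC n | (∃ z : (FC n)ˣ, aug n (↑z : FC n) = 1 ∧ y = (↑z : FC n) * starOne n ↑z)
        ∧ y ∈ sqSpan n}
      = {y : FC n | ∃ s : (FC n)ˣ, aug n (↑s : FC n) = 1 ∧ starOne n (↑s : FC n) = ↑s ∧
          y = (↑s : FC n) * ↑s} ∧
    Nat.card {y : FC n //
        (∃ z : (FC n)ˣ, aug n (↑z : FC n) = 1 ∧ y = (↑z : FC n) * starOne n ↑z)
          ∧ y ∈ sqSpan n}
      = 2 ^ (2 ^ (n - 2) - 1) := by
  set L := {y : FC n | (∃ z : (FC n)ˣ, aug n (↑z : FC n) = 1 ∧ y = (↑z : FC n) * starOne n ↑z)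
    ∧ y ∈ sqSpan n}
  set R := {y : FC n | ∃ s : (FC n)ˣ, aug n (↑s : FC n) = 1 ∧ starOne n (↑s : FC n) = ↑s ∧
    y = (↑s : FC n) * ↑s}
  have hLJ : L ⊆ jStar n := by
    rintro _ ⟨⟨z, hz, rfl⟩, hsq⟩
    exact mul_starOne_mem_jStar (by omega) hz hsq
  have hJR : jStar n ⊆ R := fun _ hy => exists_symm_unit_of_mem_jStar hn hy
  have hRL : R ⊆ L := by
    rintro _ ⟨s, hs, hstar, rfl⟩
    exact ⟨⟨s, hs, by rw [hstar]⟩, mul_self_mem_sqSpan _⟩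
  refine ⟨(hLJ.trans hJR).antisymm hRL, ?_⟩
  rw [← card_jStar hn, ← hLJ.antisymm (hJR.trans hRL)]
  rfl

end
end
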